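/- arXiv:2508.17319 — 4 statements merged into one kernel-verified Lean document; each statement's English description precedes it below -/
import Mathlib

section
/- Let L be a left Leibniz ring and H an ideal of L. Then [γ_j(H), γ_k(H)] ≤ γ_{j+k}(H) for all positive integers j, k, where γ_1(H)=H and γ_{n+1}(H)=[H,γ_n(H)]. -/
/-- For additive subgroups `A, B` of `L`, `[A,B]` is the additive subgroup generated by
all brackets `br a b` with `a ∈ A`, `b ∈ B`. -/
def brSub {L : Type*} [AddCommGroup L] (br : L → L → L) (A B : AddSubgroup L) :
    AddSubgroup L :=
  AddSubgroup.closure {x | ∃ a ∈ A, ∃ b ∈ B, x = br a b}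

/-- Lower central series, 0-indexed: `gamma br H n` is `γ_{n+1}(H)`, i.e.
`gamma br H 0 = γ₁(H) = H` and `gamma br H (n+1) = γ_{n+2}(H) = [H, γ_{n+1}(H)]`. -/
def gamma {L : Type*} [AddCommGroup L] (br : L → L → L) (H : AddSubgroup L) :
    ℕ → AddSubgroup L
  | 0 => H
  | n + 1 => brSub br H (gamma br H n)

lemma brSub_mem {L : Type*} [AddCommGroup L] (br : L → L → L) {A B : AddSubgroup L}
    {a b : L} (ha : a ∈ A) (hb : b ∈ B) : br a b ∈ brSub br A B :=
  AddSubgroup.subset_closure ⟨a, ha, b, hb, rfl⟩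

/-- `[γ_j(H), γ_k(H)] ≤ γ_{j+k}(H)` for all positive integers `j, k`
(here `gamma br H j = γ_{j+1}(H)`, so the statement reads
`[γ_{j+1}(H), γ_{k+1}(H)] ≤ γ_{(j+1)+(k+1)}(H)`). -/
theorem brSub_gamma_le_gamma_add {L : Type*} [AddCommGroup L] (br : L → L → L)
    (hadd_left : ∀ a b c : L, br (a + b) c = br a c + br b c)
    (hadd_right : ∀ a b c : L, br a (b + c) = br a b + br a c)
    (hleib : ∀ a b c : L, br a (br b c) = br (br a b) c + br b (br a c))
    (H : AddSubgroup L)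
    (hHl : ∀ x ∈ H, ∀ y : L, br y x ∈ H)
    (hHr : ∀ x ∈ H, ∀ y : L, br x y ∈ H) :
    ∀ j k : ℕ, brSub br (gamma br H j) (gamma br H k) ≤ gamma br H (j + k + 1) := by
  have hzero : ∀ c : L, br 0 c = 0 := by
    intro c
    have h := hadd_left 0 0 c
    rw [add_zero] at h
    nth_rewrite 1 [← add_zero (br 0 c)] at h
    exact (add_left_cancel h).symm
  have hneg : ∀ x c : L, br (-x) c = -br x c := by
    intro x c
    have h := hadd_left x (-x) c
    rw [add_neg_cancel, hzero] at h
    exact eq_neg_of_add_eq_zero_right h.symm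
  intro j
  induction j with
  | zero =>
      intro k
      rw [show 0 + k + 1 = k + 1 from by omega]
      exact le_of_eq rfl
  | succ j ih =>
      intro k
      have hle : ∀ a ∈ gamma br H (j + 1), ∀ c ∈ gamma br H k,
          br a c ∈ gamma br H (j + k + 2) := by
        intro a ha c hc
        refine AddSubgroup.closure_induction
          (p := fun a _ => br a c ∈ gamma br H (j + k + 2)) ?_ ?_ ?_ ?_ ha
        · rintro x ⟨u, hu, v, hv, rfl⟩
          have h1 : br v c ∈ gamma br H (j + k + 1) := ih k (brSub_mem br hv hc)
          have h2 : br u (br v c) ∈ gamma br H (j + k + 2) := brSub_mem br hu h1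
          have h3 : br u c ∈ gamma br H (k + 1) := brSub_mem br hu hc
          have h4 : br v (br u c) ∈ gamma br H (j + k + 2) := by
            have h5 := ih (k + 1) (brSub_mem br hv h3)
            rwa [show j + (k + 1) + 1 = j + k + 2 by omega] at h5
          have heq : br (br u v) c = br u (br v c) - br v (br u c) := by
            rw [hleib u v c]; abel
          rw [heq]
          exact sub_mem h2 h4
        · show br 0 c ∈ gamma br H (j + k + 2)
          rw [hzero]; exact zero_mem _
        · intro x y _ _ hx hy
          show br (x + y) c ∈ gamma br H (j + k + 2)
          rw [hadd_left]; exact add_mem hx hy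
        · intro x _ hx
          show br (-x) c ∈ gamma br H (j + k + 2)
          rw [hneg]; exact neg_mem hx
      intro x hx
      rw [show j + 1 + k + 1 = j + k + 2 by omega]
      refine (AddSubgroup.closure_le _).2 ?_ hx
      rintro y ⟨a, ha, c, hc, rfl⟩
      exact hle a ha c hc
end

section
/- Let L be a left Leibniz ring and H an ideal of L. Then each term γ_j(H) of the lower central series of H is an ideal of L. -/
section Aux

variable {L : Type*} [AddCommGroup L]

lemma br_mem_brSub (br : L → L → L) {A B : AddSubgroup L} {a b : L}
    (ha : a ∈ A) (hb : b ∈ B) : br a b ∈ brSub br A B :=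
  AddSubgroup.subset_closure ⟨a, ha, b, hb, rfl⟩

/-- Closure induction for the first argument of `br`. -/
lemma br_left_mem (br : L → L → L)
    (hadd_left : ∀ a b c : L, br (a + b) c = br a c + br b c)
    (K : AddSubgroup L) (y : L) (S : Set L)
    (h : ∀ s ∈ S, br s y ∈ K) :
    ∀ x ∈ AddSubgroup.closure S, br x y ∈ K := by
  intro x hx
  have hle : AddSubgroup.closure S ≤
      K.comap (AddMonoidHom.mk' (fun x => br x y) (fun a b => hadd_left a b y)) :=
    (AddSubgroup.closure_le _).2 h
  exact hle hx

/-- Closure induction for the second argument of `br`. -/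
lemma br_right_mem (br : L → L → L)
    (hadd_right : ∀ a b c : L, br a (b + c) = br a b + br a c)
    (K : AddSubgroup L) (y : L) (S : Set L)
    (h : ∀ s ∈ S, br y s ∈ K) :
    ∀ x ∈ AddSubgroup.closure S, br y x ∈ K := by
  intro x hx
  have hle : AddSubgroup.closure S ≤
      K.comap (AddMonoidHom.mk' (fun x => br y x) (fun a b => hadd_right y a b)) :=
    (AddSubgroup.closure_le _).2 h
  exact hle hx

/-- Key lemma: `[γ_m(H), γ_n(H)] ⊆ γ_{m+n+1}(H)` (0-indexed). -/
lemma gamma_br_gamma (br : L → L → L)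
    (hadd_left : ∀ a b c : L, br (a + b) c = br a c + br b c)
    (hleib : ∀ a b c : L, br a (br b c) = br (br a b) c + br b (br a c))
    (H : AddSubgroup L) :
    ∀ m n : ℕ, ∀ x ∈ gamma br H m, ∀ b ∈ gamma br H n,
      br x b ∈ gamma br H (m + n + 1) := by
  intro m
  induction m with
  | zero =>
      intro n x hx b hb
      have : br x b ∈ gamma br H (n + 1) := br_mem_brSub br hx hb
      simpa [Nat.zero_add] using this
  | succ m ih =>
      intro n x hx b hb
      refine br_left_mem br hadd_left _ b _ ?_ x hx
      rintro s ⟨a, ha, c, hc, rfl⟩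
      have h1 : br a (br c b) ∈ gamma br H (m + 1 + n + 1) := by
        have : br a (br c b) ∈ gamma br H (m + n + 1 + 1) :=
          br_mem_brSub br ha (ih n c hc b hb)
        have e : m + n + 1 + 1 = m + 1 + n + 1 := by omega
        rwa [e] at this
      have h2 : br c (br a b) ∈ gamma br H (m + 1 + n + 1) := by
        have : br c (br a b) ∈ gamma br H (m + (n + 1) + 1) :=
          ih (n + 1) c hc (br a b) (br_mem_brSub br ha hb)
        have e : m + (n + 1) + 1 = m + 1 + n + 1 := by omega
        rwa [e] at this
      have e : br (br a c) b = br a (br c b) - br c (br a b) := by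
        rw [hleib a c b]; abel
      rw [e]
      exact sub_mem h1 h2

end Aux

/-- Each term `γ_j(H)` of the lower central series of an ideal `H` is an ideal of `L`. -/
theorem gamma_isIdeal {L : Type*} [AddCommGroup L] (br : L → L → L)
    (hadd_left : ∀ a b c : L, br (a + b) c = br a c + br b c)
    (hadd_right : ∀ a b c : L, br a (b + c) = br a b + br a c)
    (hleib : ∀ a b c : L, br a (br b c) = br (br a b) c + br b (br a c))
    (H : AddSubgroup L)
    (hHl : ∀ x ∈ H, ∀ y : L, br y x ∈ H)
    (hHr : ∀ x ∈ H, ∀ y : L, br x y ∈ H) :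
    ∀ j : ℕ, ∀ x ∈ gamma br H j, ∀ y : L,
      br x y ∈ gamma br H j ∧ br y x ∈ gamma br H j := by
  intro j
  induction j with
  | zero => exact fun x hx y => ⟨hHr x hx y, hHl x hx y⟩
  | succ j ih =>
      intro x hx y
      constructor
      · -- right multiplication
        refine br_left_mem br hadd_left (gamma br H (j + 1)) y _ ?_ x hx
        rintro s ⟨a, ha, c, hc, rfl⟩
        have h1 : br a (br c y) ∈ gamma br H (j + 1) :=
          br_mem_brSub br ha (ih c hc y).1
        have h2 : br c (br a y) ∈ gamma br H (j + 1) := by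
          have : br c (br a y) ∈ gamma br H (j + 0 + 1) :=
            gamma_br_gamma br hadd_left hleib H j 0 c hc (br a y) (hHr a ha y)
          simpa using this
        have e : br (br a c) y = br a (br c y) - br c (br a y) := by
          rw [hleib a c y]; abel
        rw [e]
        exact sub_mem h1 h2
      · -- left multiplication
        refine br_right_mem br hadd_right (gamma br H (j + 1)) y _ ?_ x hx
        rintro s ⟨a, ha, c, hc, rfl⟩
        rw [hleib y a c]
        exact add_mem (br_mem_brSub br (hHl a ha y) hc)
          (br_mem_brSub br ha (ih c hc y).2)
end

section
/- Let L be a left Leibniz ring. The anticenter α(L) = {a in L : [x,a] = -[a,x] for all x in L} is an ideal of L. -/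
/-!
Write `[x, y]` for `B x y`. Taking `a = b` in the Leibniz identity shows that every square
`[u, u]` annihilates from the left, and polarizing gives `[[u, v], z] = -[[v, u], z]`.
For `a` in the anticenter this turns into `[a, [x, y]] = -[a, [y, x]]`; combining it with the
Leibniz identity expanded at `[x, [y, a]]` and at `[y, [a, x]]` shows that `[a, y]`
anticommutes with every `x`. Since `[y, a] = -[a, y]`, the anticenter is closed under brackets
on both sides.
-/

namespace LeftLeibniz

variable {L : Type*} [AddCommGroup L]

theorem bracket_self_bracket_eq_zero (B : L → L → L)
    (hleib : ∀ a b c : L, B a (B b c) = B (B a b) c + B b (B a c)) (u z : L) :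
    B (B u u) z = 0 :=
  right_eq_add.mp (hleib u u z)

variable (B : L →+ L →+ L)

theorem bracket_bracket_add_bracket_bracket_swap
    (hleib : ∀ a b c : L, B a (B b c) = B (B a b) c + B b (B a c)) (u v z : L) :
    B (B u v) z + B (B v u) z = 0 := by
  have h := bracket_self_bracket_eq_zero (fun x y => B x y) hleib (u + v) z
  simp only [map_add, AddMonoidHom.add_apply,
    bracket_self_bracket_eq_zero (fun x y => B x y) hleib, zero_add, add_zero] at h
  rwa [add_comm] at h

def anticenter : AddSubgroup L where
  carrier := {a | ∀ x, B x a = -B a x}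
  zero_mem' x := by simp
  add_mem' {a b} ha hb x := by
    simp only [map_add, AddMonoidHom.add_apply, ha x, hb x, neg_add]
  neg_mem' {a} ha x := by
    simp only [map_neg, AddMonoidHom.neg_apply, ha x]

theorem bracket_mem_anticenter_right
    (hleib : ∀ a b c : L, B a (B b c) = B (B a b) c + B b (B a c))
    {a : L} (ha : a ∈ anticenter B) (y : L) :
    B a y ∈ anticenter B := by
  intro x
  have hsymm : B a (B x y) + B a (B y x) = 0 := by
    have h := bracket_bracket_add_bracket_bracket_swap B hleib x y a
    rwa [ha, ha, ← neg_add, neg_eq_zero] at h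
  have hxya : B x (B a y) = B a (B x y) + B y (B a x) := by
    have h := hleib x y a
    rwa [ha, ha, ha, map_neg, map_neg, ← neg_add, neg_inj] at h
  have hyax : B y (B a x) = -B (B a y) x + B a (B y x) := by
    rw [hleib, ha y, map_neg, AddMonoidHom.neg_apply]
  rw [hxya, hyax, ← sub_eq_zero, ← hsymm]
  abel

theorem bracket_mem_anticenter_left
    (hleib : ∀ a b c : L, B a (B b c) = B (B a b) c + B b (B a c))
    {a : L} (ha : a ∈ anticenter B) (y : L) :
    B y a ∈ anticenter B := by
  rw [ha y]
  exact neg_mem (bracket_mem_anticenter_right B hleib ha y)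

end LeftLeibniz

open LeftLeibniz in
/-- The anticenter `α(L) = {a : [x,a] = -[a,x] for all x}` of a left Leibniz ring `L`
is an ideal of `L`. -/
theorem anticenter_isIdeal {L : Type*} [AddCommGroup L] (br : L → L → L)
    (hadd_left : ∀ a b c : L, br (a + b) c = br a c + br b c)
    (hadd_right : ∀ a b c : L, br a (b + c) = br a b + br a c)
    (hleib : ∀ a b c : L, br a (br b c) = br (br a b) c + br b (br a c)) :
    let A : Set L := {a | ∀ x : L, br x a = - br a x}
    (0 : L) ∈ A ∧ (∀ a ∈ A, ∀ b ∈ A, a - b ∈ A) ∧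
    (∀ a ∈ A, ∀ y : L, br a y ∈ A ∧ br y a ∈ A) := by
  let B : L →+ L →+ L :=
    AddMonoidHom.mk' (fun a => AddMonoidHom.mk' (br a) (hadd_right a))
      fun a b => AddMonoidHom.ext (hadd_left a b)
  change (0 : L) ∈ anticenter B ∧
    (∀ a ∈ anticenter B, ∀ b ∈ anticenter B, a - b ∈ anticenter B) ∧
    ∀ a ∈ anticenter B, ∀ y : L, B a y ∈ anticenter B ∧ B y a ∈ anticenter B
  exact ⟨zero_mem _, fun a ha b hb => sub_mem ha hb, fun a ha y =>
    ⟨bracket_mem_anticenter_right B hleib ha y, bracket_mem_anticenter_left B hleib ha y⟩⟩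
end

section
/- Let L be a symmetric Leibniz ring. Then the right center ζ^right(L) = {x : [y,x]=0 for all y} is an ideal of L, and moreover [ζ^right(L), L] ≤ ζ(L), where ζ(L) = {x : [x,y]=[y,x]=0 for all y} is the center; hence ζ^right(L)/ζ(L) ≤ ζ(L/ζ(L)). -/
/-!
For `a` in the right center, the left Leibniz identity at `(y, a, z)` collapses to
`[y, [a, z]] = [a, [y, z]]`. Comparing with the left Leibniz identity at `(a, y, z)` gives
`[[a, y], z] = 0`, and the right Leibniz identity at `(a, y, z)` then gives `[y, [a, z]] = 0`,
so every `[a, z]` is central.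
-/

section SymmetricLeibniz

variable {L : Type*} [AddCommGroup L]

def rightCenter (br : L → L → L) : Set L := {x | ∀ y, br y x = 0}

def center (br : L → L → L) : Set L := {x | ∀ y, br x y = 0 ∧ br y x = 0}

variable {br : L → L → L}

theorem mem_rightCenter_of_mem_center {x : L} (hx : x ∈ center br) : x ∈ rightCenter br :=
  fun y => (hx y).2

theorem bracket_zero_right (hadd_right : ∀ a b c : L, br a (b + c) = br a b + br a c) (y : L) :
    br y 0 = 0 := by
  simpa using hadd_right y 0 0

/-- Left Leibniz at `(0, 0, y)` reads `[0, [0, y]] = [[0, 0], y] + [0, [0, y]]`. -/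
theorem bracket_zero_left (hadd_right : ∀ a b c : L, br a (b + c) = br a b + br a c)
    (hleib : ∀ a b c : L, br a (br b c) = br (br a b) c + br b (br a c)) (y : L) :
    br 0 y = 0 := by
  simpa [bracket_zero_right hadd_right] using hleib 0 0 y

theorem zero_mem_rightCenter (hadd_right : ∀ a b c : L, br a (b + c) = br a b + br a c) :
    (0 : L) ∈ rightCenter br :=
  bracket_zero_right hadd_right

theorem zero_mem_center (hadd_right : ∀ a b c : L, br a (b + c) = br a b + br a c)
    (hleib : ∀ a b c : L, br a (br b c) = br (br a b) c + br b (br a c)) :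
    (0 : L) ∈ center br :=
  fun y => ⟨bracket_zero_left hadd_right hleib y, bracket_zero_right hadd_right y⟩

theorem sub_mem_rightCenter (hadd_right : ∀ a b c : L, br a (b + c) = br a b + br a c)
    {a b : L} (ha : a ∈ rightCenter br) (hb : b ∈ rightCenter br) : a - b ∈ rightCenter br := by
  intro y
  have h := hadd_right y (a - b) b
  rw [sub_add_cancel, ha y, hb y, add_zero] at h
  exact h.symm

theorem bracket_bracket_comm_of_mem_rightCenter
    (hadd_right : ∀ a b c : L, br a (b + c) = br a b + br a c)
    (hleib : ∀ a b c : L, br a (br b c) = br (br a b) c + br b (br a c))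
    {a : L} (ha : a ∈ rightCenter br) (y z : L) : br y (br a z) = br a (br y z) := by
  simpa [ha y, bracket_zero_left hadd_right hleib] using hleib y a z

theorem bracket_left_eq_zero_of_mem_rightCenter
    (hadd_right : ∀ a b c : L, br a (b + c) = br a b + br a c)
    (hleib : ∀ a b c : L, br a (br b c) = br (br a b) c + br b (br a c))
    {a : L} (ha : a ∈ rightCenter br) (y z : L) : br (br a y) z = 0 :=
  calc br (br a y) z = br a (br y z) - br y (br a z) := eq_sub_of_add_eq (hleib a y z).symm
    _ = 0 := by rw [bracket_bracket_comm_of_mem_rightCenter hadd_right hleib ha, sub_self]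

theorem bracket_right_eq_zero_of_mem_rightCenter
    (hadd_right : ∀ a b c : L, br a (b + c) = br a b + br a c)
    (hleib : ∀ a b c : L, br a (br b c) = br (br a b) c + br b (br a c))
    (hright : ∀ a b c : L, br a (br b c) = br (br a b) c - br (br a c) b)
    {a : L} (ha : a ∈ rightCenter br) (y z : L) : br y (br a z) = 0 :=
  calc br y (br a z) = br a (br y z) :=
        bracket_bracket_comm_of_mem_rightCenter hadd_right hleib ha y z
    _ = br (br a y) z - br (br a z) y := hright a y z
    _ = 0 := by
        rw [bracket_left_eq_zero_of_mem_rightCenter hadd_right hleib ha,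
          bracket_left_eq_zero_of_mem_rightCenter hadd_right hleib ha, sub_zero]

theorem bracket_mem_center_of_mem_rightCenter
    (hadd_right : ∀ a b c : L, br a (b + c) = br a b + br a c)
    (hleib : ∀ a b c : L, br a (br b c) = br (br a b) c + br b (br a c))
    (hright : ∀ a b c : L, br a (br b c) = br (br a b) c - br (br a c) b)
    {a : L} (ha : a ∈ rightCenter br) (y : L) : br a y ∈ center br :=
  fun z => ⟨bracket_left_eq_zero_of_mem_rightCenter hadd_right hleib ha y z,
    bracket_right_eq_zero_of_mem_rightCenter hadd_right hleib hright ha z y⟩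

end SymmetricLeibniz

theorem rightCenter_isIdeal_symmetric_general {L : Type*} [AddCommGroup L] (br : L → L → L)
    (hadd_right : ∀ a b c : L, br a (b + c) = br a b + br a c)
    (hleib : ∀ a b c : L, br a (br b c) = br (br a b) c + br b (br a c))
    (hright : ∀ a b c : L, br a (br b c) = br (br a b) c - br (br a c) b) :
    let Zr : Set L := {x | ∀ y : L, br y x = 0}
    let Z : Set L := {x | ∀ y : L, br x y = 0 ∧ br y x = 0}
    (0 : L) ∈ Zr ∧ (∀ a ∈ Zr, ∀ b ∈ Zr, a - b ∈ Zr) ∧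
    (∀ a ∈ Zr, ∀ y : L, br a y ∈ Zr ∧ br y a ∈ Zr) ∧
    (∀ a ∈ Zr, ∀ y : L, br a y ∈ Z ∧ br y a ∈ Z) := by
  intro Zr Z
  have bracket_mem_center : ∀ a ∈ rightCenter br, ∀ y : L,
      br a y ∈ center br ∧ br y a ∈ center br := fun a ha y =>
    ⟨bracket_mem_center_of_mem_rightCenter hadd_right hleib hright ha y,
      (ha y).symm ▸ zero_mem_center hadd_right hleib⟩
  refine ⟨zero_mem_rightCenter hadd_right,
    fun a ha b hb => sub_mem_rightCenter hadd_right ha hb, fun a ha y => ?_, bracket_mem_center⟩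
  obtain ⟨hay, hya⟩ := bracket_mem_center a ha y
  exact ⟨mem_rightCenter_of_mem_center hay, mem_rightCenter_of_mem_center hya⟩

/-- In a symmetric Leibniz ring `L`, the right center `ζ^right(L)` is an ideal of `L`
and `[ζ^right(L), L] ≤ ζ(L)` (and `[L, ζ^right(L)] ≤ ζ(L)`), whence
`ζ^right(L)/ζ(L) ≤ ζ(L/ζ(L))`. -/
theorem rightCenter_isIdeal_symmetric {L : Type*} [AddCommGroup L] (br : L → L → L)
    (hadd_left : ∀ a b c : L, br (a + b) c = br a c + br b c)
    (hadd_right : ∀ a b c : L, br a (b + c) = br a b + br a c)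
    (hleib : ∀ a b c : L, br a (br b c) = br (br a b) c + br b (br a c))
    (hright : ∀ a b c : L, br a (br b c) = br (br a b) c - br (br a c) b) :
    let Zr : Set L := {x | ∀ y : L, br y x = 0}
    let Z : Set L := {x | ∀ y : L, br x y = 0 ∧ br y x = 0}
    (0 : L) ∈ Zr ∧ (∀ a ∈ Zr, ∀ b ∈ Zr, a - b ∈ Zr) ∧
    (∀ a ∈ Zr, ∀ y : L, br a y ∈ Zr ∧ br y a ∈ Zr) ∧
    (∀ a ∈ Zr, ∀ y : L, br a y ∈ Z ∧ br y a ∈ Z) :=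
  rightCenter_isIdeal_symmetric_general br hadd_right hleib hright
end
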